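/- Let Δ = (𝔡₁,…,𝔡_d) be a system of delta operators on ℝ[x₁,…,x_d] with basic sequence (p_n)_{n∈ℕ^d}, let Z = (z_k)_{k∈ℕ^d} ⊆ ℝ^d be a grid with delta Gončarov polynomials t_k(·;Z), and let S ⊆ ℕ^d be a finite lower set (k ∈ S and j ≤ k imply j ∈ S). Then for every family of real numbers (b_k)_{k∈S} there is a unique polynomial P in the ℝ-linear span of {p_k : k ∈ S} satisfying (𝔡^k P)(z_k) = b_k for all k ∈ S, and it is given by P = ∑_{k∈S} (b_k/k!)·t_k(·;Z). -/
import Mathlib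


open MvPolynomial

noncomputable section

/-- The algebra of real polynomials in `d` variables `x₁, …, x_d`. -/
abbrev MvP (d : ℕ) := MvPolynomial (Fin d) ℝ

/-- The shift operator `E_v : p(x) ↦ p(x + v)`. -/
def shiftOp {d : ℕ} (v : Fin d → ℝ) : Module.End ℝ (MvP d) :=
  (MvPolynomial.aeval (fun i => X i + C (v i)) : MvP d →ₐ[ℝ] MvP d).toLinearMap

/-- A linear operator on `ℝ[x₁,…,x_d]` is shift-invariant if it commutes with
every shift operator. -/
def ShiftInv {d : ℕ} (L : Module.End ℝ (MvP d)) : Prop :=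
  ∀ v : Fin d → ℝ, L * shiftOp v = shiftOp v * L

/-- `(𝔡₁, …, 𝔡_d)` is a system of delta operators: each `𝔡_i` is shift-invariant,
each `𝔡_i` maps every homogeneous linear polynomial to a constant, and for a
nonzero homogeneous linear polynomial at least one `𝔡_i p` is nonzero. -/
def IsDeltaSystem {d : ℕ} (D : Fin d → Module.End ℝ (MvP d)) : Prop :=
  (∀ i, ShiftInv (D i)) ∧
  ∀ a : Fin d → ℝ,
    (∀ i, ∃ c : ℝ, D i (∑ j, C (a j) * X j) = C c) ∧
    ((∑ j, C (a j) * X j) ≠ 0 → ∃ i, D i (∑ j, C (a j) * X j) ≠ 0)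


/-- `𝔡^k = 𝔡₁^{k₁} ∘ ⋯ ∘ 𝔡_d^{k_d}`. -/
def dpow {d : ℕ} (D : Fin d → Module.End ℝ (MvP d)) (k : Fin d → ℕ) :
    Module.End ℝ (MvP d) :=
  (List.ofFn fun i => (D i) ^ (k i)).prod

/-- `(p_n)_{n ∈ ℕ^d}` is a basic sequence of the system `D`:
`deg p_n = |n|`, `p_0 = 1`, `p_n(0) = 0` for `|n| ≥ 1`, and
`𝔡_i p_n = n_i • p_{n - e_i}`. -/
def IsBasicSeq {d : ℕ} (D : Fin d → Module.End ℝ (MvP d))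
    (p : (Fin d → ℕ) → MvP d) : Prop :=
  (∀ n : Fin d → ℕ, (p n).totalDegree = ∑ i, n i) ∧
  p 0 = 1 ∧
  (∀ n : Fin d → ℕ, 1 ≤ ∑ i, n i → eval (0 : Fin d → ℝ) (p n) = 0) ∧
  ∀ (n : Fin d → ℕ) (i : Fin d), D i (p n) = (n i : ℝ) • p (n - Pi.single i 1)

/-- `Π_n(Δ)`: the span of the basic polynomials `p_k` with `k ≤ n`
(componentwise order). -/
def Pin {d : ℕ} (p : (Fin d → ℕ) → MvP d) (n : Fin d → ℕ) : Submodule ℝ (MvP d) :=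
  Submodule.span ℝ (p '' {k | k ≤ n})

/-- `n! = n₁! ⋯ n_d!` as a real number. -/
def natFact {d : ℕ} (n : Fin d → ℕ) : ℝ := ∏ i, (Nat.factorial (n i) : ℝ)

/-- `t` is the delta Gončarov polynomial `t_n(·;Z)` for the system `D` with
basic sequence `p` and grid `Z`: `t ∈ Π_n(Δ)` and
`(𝔡^k t)(z_k) = n!·δ_{k,n}` for all `k ≤ n`. -/
def IsGoncarov {d : ℕ} (D : Fin d → Module.End ℝ (MvP d))
    (p : (Fin d → ℕ) → MvP d) (Z : (Fin d → ℕ) → (Fin d → ℝ))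
    (n : Fin d → ℕ) (t : MvP d) : Prop :=
  t ∈ Pin p n ∧
  ∀ k ≤ n, eval (Z k) (dpow D k t) = if k = n then natFact n else 0

lemma pow_apply_basic {d : ℕ} (D : Fin d → Module.End ℝ (MvP d))
    (p : (Fin d → ℕ) → MvP d)
    (hp : ∀ (n : Fin d → ℕ) (i : Fin d), D i (p n) = (n i : ℝ) • p (n - Pi.single i 1))
    (i : Fin d) (a : ℕ) : ∀ n : Fin d → ℕ,
    ((D i) ^ a) (p n) = ((n i).descFactorial a : ℝ) • p (n - Pi.single i a) := by
  induction a with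
  | zero =>
    intro n
    simp
  | succ a ih =>
    intro n
    rw [pow_succ, Module.End.mul_apply, hp, map_smul, ih, smul_smul]
    have hni : ((n - Pi.single i 1 : Fin d → ℕ)) i = n i - 1 := by simp
    have hfun : (n - Pi.single i 1 - Pi.single i a : Fin d → ℕ) = n - Pi.single i (a + 1) := by
      funext j
      by_cases hj : j = i
      · subst hj
        simp [Nat.sub_sub, Nat.add_comm]
      · simp [Pi.single_eq_of_ne hj]
    rw [hni, hfun]
    congr 1
    have : n i * (n i - 1).descFactorial a = (n i).descFactorial (a + 1) := by
      cases hni2 : n i with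
      | zero => simp
      | succ m => rw [Nat.succ_descFactorial_succ]; simp
    push_cast [← this]
    ring

lemma listprod_apply_basic {d : ℕ} (D : Fin d → Module.End ℝ (MvP d))
    (p : (Fin d → ℕ) → MvP d)
    (hp : ∀ (n : Fin d → ℕ) (i : Fin d), D i (p n) = (n i : ℝ) • p (n - Pi.single i 1))
    (k : Fin d → ℕ) :
    ∀ (l : List (Fin d)), l.Nodup → ∀ m : Fin d → ℕ,
      ((l.map fun i => (D i) ^ (k i)).prod) (p m)
        = (∏ i ∈ l.toFinset, ((m i).descFactorial (k i) : ℝ))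
            • p (fun j => m j - if j ∈ l then k j else 0) := by
  intro l
  induction l with
  | nil =>
    intro _ m
    simp
  | cons i l ih =>
    intro hnd m
    have hi : i ∉ l := (List.nodup_cons.mp hnd).1
    have hl : l.Nodup := (List.nodup_cons.mp hnd).2
    rw [List.map_cons, List.prod_cons, Module.End.mul_apply, ih hl m, map_smul,
      pow_apply_basic D p hp]
    set m' : Fin d → ℕ := fun j => m j - if j ∈ l then k j else 0 with hm'
    have h1 : m' i = m i := by simp [hm', hi]
    have h2 : m' - Pi.single i (k i) = fun j => m j - if j ∈ (i :: l) then k j else 0 := by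
      funext j
      by_cases hj : j = i
      · subst hj
        simp [hm', hi]
      · simp [hm', Pi.single_eq_of_ne hj, List.mem_cons, hj]
    simp only [hi, if_false, Nat.sub_zero]
    rw [h2, smul_smul]
    congr 1
    rw [List.toFinset_cons, Finset.prod_insert (by simpa using hi), mul_comm]

lemma dpow_apply_basic {d : ℕ} (D : Fin d → Module.End ℝ (MvP d))
    (p : (Fin d → ℕ) → MvP d)
    (hp : ∀ (n : Fin d → ℕ) (i : Fin d), D i (p n) = (n i : ℝ) • p (n - Pi.single i 1))
    (k m : Fin d → ℕ) :
    dpow D k (p m) = (∏ i, ((m i).descFactorial (k i) : ℝ)) • p (m - k) := by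
  rw [dpow, List.ofFn_eq_map, listprod_apply_basic D p hp k _ (List.nodup_finRange d),
    List.toFinset_finRange]
  have : (fun j => m j - if j ∈ List.finRange d then k j else 0) = m - k := by
    funext j
    simp [List.mem_finRange]
  rw [this]


lemma dpow_p_zero {d : ℕ} (D : Fin d → Module.End ℝ (MvP d))
    (p : (Fin d → ℕ) → MvP d)
    (hp : ∀ (n : Fin d → ℕ) (i : Fin d), D i (p n) = (n i : ℝ) • p (n - Pi.single i 1))
    {k m : Fin d → ℕ} (h : ¬ k ≤ m) : dpow D k (p m) = 0 := by
  rw [dpow_apply_basic D p hp]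
  obtain ⟨i, hi⟩ : ∃ i, m i < k i := by
    by_contra hc
    push_neg at hc
    exact h fun i => hc i
  have : (∏ i, ((m i).descFactorial (k i) : ℝ)) = 0 := by
    apply Finset.prod_eq_zero (Finset.mem_univ i)
    rw [Nat.descFactorial_eq_zero_iff_lt.mpr hi]
    simp
  rw [this, zero_smul]

lemma dpow_p_self {d : ℕ} (D : Fin d → Module.End ℝ (MvP d))
    (p : (Fin d → ℕ) → MvP d)
    (hp : ∀ (n : Fin d → ℕ) (i : Fin d), D i (p n) = (n i : ℝ) • p (n - Pi.single i 1))
    (hp0 : p 0 = 1) (k : Fin d → ℕ) : dpow D k (p k) = natFact k • 1 := by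
  rw [dpow_apply_basic D p hp]
  have h1 : k - k = (0 : Fin d → ℕ) := by
    funext j; simp
  rw [h1, hp0]
  congr 1
  unfold natFact
  exact Finset.prod_congr rfl fun i _ => by rw [Nat.descFactorial_self]

lemma natFact_ne_zero {d : ℕ} (k : Fin d → ℕ) : natFact k ≠ 0 := by
  unfold natFact
  exact Finset.prod_ne_zero_iff.mpr fun i _ => by
    exact_mod_cast (Nat.factorial_pos (k i)).ne'

/-- over a finite lower set `S`, the Gončarov interpolation problem
with data `(b_k)_{k ∈ S}` has the unique solution
`P = ∑_{k ∈ S} (b_k / k!) • t_k(·;Z)` in the span of `{p_k : k ∈ S}`. -/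
theorem goncarov_interpolation_solution {d : ℕ} (hd : 1 ≤ d)
    (D : Fin d → Module.End ℝ (MvP d)) (hD : IsDeltaSystem D)
    (p : (Fin d → ℕ) → MvP d) (hp : IsBasicSeq D p)
    (Z : (Fin d → ℕ) → (Fin d → ℝ))
    (t : (Fin d → ℕ) → MvP d) (ht : ∀ k, IsGoncarov D p Z k (t k))
    (S : Finset (Fin d → ℕ)) (hS : ∀ k ∈ S, ∀ j ≤ k, j ∈ S)
    (b : (Fin d → ℕ) → ℝ) :
    (∑ k ∈ S, (b k / natFact k) • t k) ∈ Submodule.span ℝ (p '' ↑S) ∧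
    (∀ k ∈ S, eval (Z k) ((dpow D k) (∑ k ∈ S, (b k / natFact k) • t k)) = b k) ∧
    (∀ P ∈ Submodule.span ℝ (p '' ↑S),
      (∀ k ∈ S, eval (Z k) ((dpow D k) P) = b k) →
        P = ∑ k ∈ S, (b k / natFact k) • t k) := by
  obtain ⟨hdeg, hp0, hvan, hpd⟩ := hp
  -- evaluation of the Goncarov functionals on the t's
  have hval : ∀ j k : Fin d → ℕ, eval (Z k) (dpow D k (t j)) =
      if k = j then natFact j else 0 := by
    intro j k
    by_cases hkj : k ≤ j
    · exact (ht j).2 k hkj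
    · have hker : Pin p j ≤ LinearMap.ker (dpow D k) := by
        rw [Pin, Submodule.span_le]
        rintro q ⟨m, hm, rfl⟩
        have : ¬ k ≤ m := fun h => hkj (h.trans hm)
        simpa [LinearMap.mem_ker] using dpow_p_zero D p hpd this
      have := hker (ht j).1
      rw [LinearMap.mem_ker] at this
      rw [this]
      have : k ≠ j := fun h => hkj (h ▸ le_refl k)
      simp [this]
  -- membership
  have hmem : (∑ k ∈ S, (b k / natFact k) • t k) ∈ Submodule.span ℝ (p '' ↑S) := by
    apply Submodule.sum_mem
    intro k hk
    apply Submodule.smul_mem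
    have : Pin p k ≤ Submodule.span ℝ (p '' ↑S) := by
      apply Submodule.span_mono
      apply Set.image_mono
      intro j hj
      exact hS k hk j hj
    exact this (ht k).1
  -- interpolation values
  have hinterp : ∀ k ∈ S, eval (Z k) ((dpow D k) (∑ k ∈ S, (b k / natFact k) • t k)) = b k := by
    intro k hk
    rw [map_sum, map_sum]
    have : ∀ j ∈ S, eval (Z k) ((dpow D k) ((b j / natFact j) • t j)) =
        if j = k then b k else 0 := by
      intro j hj
      rw [map_smul, smul_eval, hval]
      by_cases hjk : j = k
      · subst hjk
        simp [div_mul_cancel₀ (b j) (natFact_ne_zero j)]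
      · have : k ≠ j := fun h => hjk h.symm
        simp [this, hjk]
    rw [Finset.sum_congr rfl this, Finset.sum_ite_eq' S k fun _ => b k, if_pos hk]
  refine ⟨hmem, hinterp, ?_⟩
  -- uniqueness
  intro P hP hPval
  set T := ∑ k ∈ S, (b k / natFact k) • t k with hT
  have hQmem : P - T ∈ Submodule.span ℝ (p '' ↑S) := Submodule.sub_mem _ hP hmem
  obtain ⟨c, hcsupp, hcQ⟩ := (Finsupp.mem_span_image_iff_linearCombination ℝ).mp hQmem
  have hcsupp' : ↑c.support ⊆ (↑S : Set (Fin d → ℕ)) := hcsupp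
  have hQ0 : ∀ k ∈ S, eval (Z k) (dpow D k (P - T)) = 0 := by
    intro k hk
    rw [map_sub, map_sub, hPval k hk, hinterp k hk, sub_self]
  have hrep : ∀ k : Fin d → ℕ, eval (Z k) (dpow D k (P - T)) =
      ∑ m ∈ S, c m * eval (Z k) (dpow D k (p m)) := by
    intro k
    rw [← hcQ, Finsupp.linearCombination_apply, Finsupp.sum, map_sum, map_sum]
    rw [Finset.sum_subset (fun m hm => hcsupp' hm)]
    · exact Finset.sum_congr rfl fun m _ => by rw [map_smul, smul_eval]
    · intro m _ hm
      rw [Finsupp.notMem_support_iff.mp hm, zero_smul, map_zero, map_zero]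
  set B := S.sup (fun m => ∑ i, m i) with hB
  clear_value B
  have key : ∀ r : ℕ, ∀ k ∈ S, B - (∑ i, k i) = r → c k = 0 := by
    intro r
    induction r using Nat.strong_induction_on with
    | _ r ih =>
      intro k hk hr
      have heq : (0 : ℝ) = ∑ m ∈ S, c m * eval (Z k) (dpow D k (p m)) := by
        rw [← hrep k, hQ0 k hk]
      have hsingle : ∑ m ∈ S, c m * eval (Z k) (dpow D k (p m)) = c k * natFact k := by
        rw [Finset.sum_eq_single_of_mem k hk]
        · rw [dpow_p_self D p hpd hp0, smul_eval, map_one, mul_one]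
        · intro m hm hne
          by_cases hkm : k ≤ m
          · have hlt : (∑ i, k i) < ∑ i, m i := by
              refine Finset.sum_lt_sum (fun i _ => hkm i) ?_
              by_contra hcon
              push_neg at hcon
              exact hne (le_antisymm hkm (fun i => hcon i (Finset.mem_univ i))).symm
            have hmB : (∑ i, m i) ≤ B := hB ▸ Finset.le_sup hm
            have hkB : (∑ i, k i) < B := lt_of_lt_of_le hlt hmB
            have hlt2 : B - (∑ i, m i) < r :=
              lt_of_lt_of_eq (Nat.sub_lt_sub_left hkB hlt) hr
            have : c m = 0 := ih _ hlt2 m hm rfl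
            rw [this, zero_mul]
          · rw [dpow_p_zero D p hpd hkm, map_zero, mul_zero]
      have : c k * natFact k = 0 := by rw [← hsingle, ← heq]
      exact (mul_eq_zero.mp this).resolve_right (natFact_ne_zero k)
  have hc0 : c = 0 := by
    ext m
    by_cases hm : m ∈ S
    · exact key (B - ∑ i, m i) m hm rfl
    · by_contra hne
      exact hm (hcsupp' (Finsupp.mem_support_iff.mpr hne))
  have : P - T = 0 := by
    rw [← hcQ, hc0, map_zero]
  exact sub_eq_zero.mp this


end
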